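/- Fix x_0 ∈ ℝ^n and let x* be the unique point with A x* = b and x* ∈ x_0 + R(Aᵀ). Then for every x ∈ x_0 + R(Aᵀ), setting y_0 := x and y_j := P_j(y_{j−1}) for j = 1,…,p, one has Σ_{j=1}^p ‖y_j − y_{j−1}‖² + ‖P(x) − x‖² = 2⟨x* − x, P(x) − x⟩, where ⟨·,·⟩ is the Euclidean inner product. -/

import Mathlib

/-!
Since `P_j x + N(A_j) ⊆ H_j`, minimality of `‖x - P_j x‖` makes `x - P_j x` orthogonal to
`N(A_j)`, hence to `xs - P_j x` for the solution `xs ∈ H_j`. So each step satisfies Pythagoras: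
`‖xs - y_{j-1}‖² = ‖xs - y_j‖² + ‖y_j - y_{j-1}‖²`. Telescoping gives
`Σ ‖y_j - y_{j-1}‖² = ‖xs - x‖² - ‖xs - P x‖²`, and expanding
`‖xs - P x‖² = ‖(xs - x) - (P x - x)‖²` turns the right-hand side into
`2⟪xs - x, P x - x⟫ - ‖P x - x‖²`.
-/

open scoped RealInnerProductSpace

noncomputable section

abbrev Euc (n : ℕ) := EuclideanSpace ℝ (Fin n)

/-- Intermediate Kaczmarz chain: `chainK Pj x j` is `y_j` with `y_0 = x`, `y_{j+1} = P_{j+1}(y_j)`. -/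
def chainK {n p : ℕ} (Pj : Fin p → Euc n → Euc n) (x : Euc n) : ℕ → Euc n
  | 0 => x
  | j + 1 => if h : j < p then Pj ⟨j, h⟩ (chainK Pj x j) else chainK Pj x j

/-- The block Kaczmarz operator `P = P_p ∘ ⋯ ∘ P_1`. -/
def kacz {n p : ℕ} (Pj : Fin p → Euc n → Euc n) (x : Euc n) : Euc n := chainK Pj x p

/-- `f` sends each point to the (unique) nearest point of `S`. -/
def IsNearestPointMap {n : ℕ} (S : Set (Euc n)) (f : Euc n → Euc n) : Prop :=
  ∀ x, f x ∈ S ∧ ∀ y ∈ S, dist x (f x) ≤ dist x y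

/-- The stacked (full) matrix `A` with blocks `A_j`. -/
def fullA {n p : ℕ} (m : Fin p → ℕ)
    (A : ∀ j : Fin p, Euc n →ₗ[ℝ] Euc (m j)) :
    Euc n →ₗ[ℝ] PiLp 2 (fun j => Euc (m j)) :=
  (WithLp.linearEquiv 2 ℝ (∀ j, Euc (m j))).symm.toLinearMap ∘ₗ LinearMap.pi A

/-- The range of `Aᵀ` for the stacked matrix. -/
def RAT {n p : ℕ} (m : Fin p → ℕ)
    (A : ∀ j : Fin p, Euc n →ₗ[ℝ] Euc (m j)) : Submodule ℝ (Euc n) :=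
  LinearMap.range (LinearMap.adjoint (fullA m A))

/-- Orthogonal projection onto a subspace, as an endomorphism. -/
def projSub {n : ℕ} (K : Submodule ℝ (Euc n)) : Euc n →ₗ[ℝ] Euc n :=
  K.subtype ∘ₗ (K.orthogonalProjection).toLinearMap

/-- `Tchain m A j = Q_j ∘ ⋯ ∘ Q_1`, with `Q_i` the orthogonal projection onto `N(A_i)`. -/
def Tchain {n p : ℕ} (m : Fin p → ℕ)
    (A : ∀ j : Fin p, Euc n →ₗ[ℝ] Euc (m j)) :
    ℕ → (Euc n →ₗ[ℝ] Euc n)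
  | 0 => LinearMap.id
  | j + 1 => if h : j < p then projSub (LinearMap.ker (A ⟨j, h⟩)) ∘ₗ Tchain m A j
             else Tchain m A j

/-- `T = Q_p ∘ ⋯ ∘ Q_1`. -/
def Tmap {n p : ℕ} (m : Fin p → ℕ)
    (A : ∀ j : Fin p, Euc n →ₗ[ℝ] Euc (m j)) : Euc n →ₗ[ℝ] Euc n :=
  Tchain m A p

/-- `C = I - T`. -/
def Cmap {n p : ℕ} (m : Fin p → ℕ)
    (A : ∀ j : Fin p, Euc n →ₗ[ℝ] Euc (m j)) : Euc n →ₗ[ℝ] Euc n :=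
  LinearMap.id - Tmap m A

/-- The Krylov space `K_k(C, r) = span(r, Cr, …, C^{k-1} r)`. -/
def krylov {n : ℕ} (C : Euc n →ₗ[ℝ] Euc n) (r : Euc n) (k : ℕ) : Submodule ℝ (Euc n) :=
  Submodule.span ℝ {v | ∃ i < k, v = (C ^ i) r}

/-- `z` is the unique minimizer of `‖x - xs‖²` over `S`. -/
def IsUniqueMinimizer {n : ℕ} (xs : Euc n) (S : Set (Euc n)) (z : Euc n) : Prop :=
  z ∈ S ∧ ∀ y ∈ S, y ≠ z → ‖z - xs‖ ^ 2 < ‖y - xs‖ ^ 2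

/-- The affine Krylov space `x₀ + K_k(C, r)` as a set. -/
def affKrylov {n : ℕ} (x0 : Euc n) (C : Euc n →ₗ[ℝ] Euc n) (r : Euc n) (k : ℕ) :
    Set (Euc n) :=
  (fun v => x0 + v) '' (krylov C r k : Set (Euc n))

theorem Submodule.inner_eq_zero_of_forall_norm_le_norm_sub {E : Type*}
    [NormedAddCommGroup E] [InnerProductSpace ℝ E] (K : Submodule ℝ E) {u : E}
    (hu : ∀ w ∈ K, ‖u‖ ≤ ‖u - w‖) {w : E} (hw : w ∈ K) : ⟪u, w⟫ = 0 := by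
  have hmin : ‖u - 0‖ = ⨅ w : (K : Set E), ‖u - w‖ :=
    le_antisymm (le_ciInf fun w => by simpa using hu w w.2)
      (ciInf_le_of_le ⟨0, fun _ ⟨w, hw⟩ => hw ▸ norm_nonneg _⟩ ⟨0, K.zero_mem⟩ le_rfl)
  simpa using (norm_eq_iInf_iff_real_inner_eq_zero K K.zero_mem).1 hmin w hw

theorem IsNearestPointMap.norm_sub_sq_eq_add {n m : ℕ} {A : Euc n →ₗ[ℝ] Euc m} {b : Euc m}
    {f : Euc n → Euc n} (hf : IsNearestPointMap {z | A z = b} f) (x : Euc n) {h : Euc n}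
    (hh : A h = b) : ‖h - x‖ ^ 2 = ‖h - f x‖ ^ 2 + ‖f x - x‖ ^ 2 := by
  obtain ⟨hfx, hmin⟩ := hf x
  replace hfx : A (f x) = b := hfx
  have horth : ⟪h - f x, f x - x⟫ = 0 := by
    rw [← neg_sub x (f x), inner_neg_right, real_inner_comm, neg_eq_zero]
    refine (LinearMap.ker A).inner_eq_zero_of_forall_norm_le_norm_sub (fun w hw => ?_) ?_
    · have hmem : A (f x + w) = b := by simp [hfx, LinearMap.mem_ker.1 hw]
      simpa [dist_eq_norm, sub_sub] using hmin _ hmem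
    · simp [LinearMap.mem_ker, hh, hfx]
  rw [← sub_add_sub_cancel h (f x) x, norm_add_sq_real, horth]
  ring

theorem sum_norm_sq_chainK_succ_sub_add {n p : ℕ} {Pj : Fin p → Euc n → Euc n} {xs : Euc n}
    (hpyth : ∀ j y, ‖xs - y‖ ^ 2 = ‖xs - Pj j y‖ ^ 2 + ‖Pj j y - y‖ ^ 2) (x : Euc n) :
    ∀ k ≤ p, (∑ j ∈ Finset.range k, ‖chainK Pj x (j + 1) - chainK Pj x j‖ ^ 2)
        + ‖xs - chainK Pj x k‖ ^ 2 = ‖xs - x‖ ^ 2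
  | 0, _ => by simp [chainK]
  | k + 1, hk => by
    have hk : k < p := hk
    have hstep : chainK Pj x (k + 1) = Pj ⟨k, hk⟩ (chainK Pj x k) := by rw [chainK, dif_pos hk]
    rw [Finset.sum_range_succ, ← sum_norm_sq_chainK_succ_sub_add hpyth x k (by omega),
      hpyth ⟨k, hk⟩ (chainK Pj x k), hstep]
    ring

theorem stmt6_general
    {n p : ℕ} (msz : Fin p → ℕ)
    (A : ∀ j : Fin p, Euc n →ₗ[ℝ] Euc (msz j))
    (b : ∀ j : Fin p, Euc (msz j))
    (Pj : Fin p → Euc n → Euc n)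
    (hPj : ∀ j : Fin p, IsNearestPointMap {z : Euc n | A j z = b j} (Pj j))
    (xs : Euc n) (hxs : ∀ j, A j xs = b j)
    (x : Euc n) :
    (∑ j ∈ Finset.range p, ‖chainK Pj x (j + 1) - chainK Pj x j‖ ^ 2)
        + ‖kacz Pj x - x‖ ^ 2 =
      2 * ⟪xs - x, kacz Pj x - x⟫ := by
  have htelescope := sum_norm_sq_chainK_succ_sub_add
    (fun j y => (hPj j).norm_sub_sq_eq_add y (hxs j)) x p le_rfl
  have hexpand : ‖xs - kacz Pj x‖ ^ 2
      = ‖xs - x‖ ^ 2 - 2 * ⟪xs - x, kacz Pj x - x⟫ + ‖kacz Pj x - x‖ ^ 2 := by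
    rw [← norm_sub_sq_real, sub_sub_sub_cancel_right]
  rw [kacz] at hexpand ⊢
  linarith

theorem stmt6
    {n p : ℕ} (msz : Fin p → ℕ)
    (A : ∀ j : Fin p, Euc n →ₗ[ℝ] Euc (msz j))
    (b : ∀ j : Fin p, Euc (msz j))
    (hcons : ∃ z : Euc n, ∀ j, A j z = b j)
    (Pj : Fin p → Euc n → Euc n)
    (hPj : ∀ j : Fin p, IsNearestPointMap {z : Euc n | A j z = b j} (Pj j))
    (x0 xs : Euc n) (hxs : ∀ j, A j xs = b j) (hxs' : xs - x0 ∈ RAT msz A)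
    (x : Euc n) (hx : x - x0 ∈ RAT msz A) :
    (∑ j ∈ Finset.range p, ‖chainK Pj x (j + 1) - chainK Pj x j‖ ^ 2)
        + ‖kacz Pj x - x‖ ^ 2 =
      2 * ⟪xs - x, kacz Pj x - x⟫ :=
  stmt6_general msz A b Pj hPj xs hxs x

end
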